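/- arXiv:1108.3277 — 7 statements merged into one kernel-verified Lean document; each statement's English description precedes it below -/
import Mathlib

section
/- Let R be a ring. Then every finitely generated essential extension of a simple left R-module is Artinian if and only if every left R-module is a subdirect product of locally Artinian modules. -/
/-!
If `K` is maximal among submodules avoiding a fixed `m ≠ 0`, then the image of `m` lies in every
nonzero submodule of `M ⧸ K`; so every nonzero finitely generated submodule of `M ⧸ K` is an
essential extension of the simple module spanned by it, hence Artinian under (◇). These quotients,
one for each `m ≠ 0`, present `M` as a subdirect product.

Conversely, if a finitely generated `M` is an essential extension of a simple `E` and embeds in a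
product, some coordinate projection is injective on the atom `E`, hence injective by essentiality,
and `M` becomes a finitely generated submodule of a locally Artinian factor.
-/

universe u v

/-- A module is locally Artinian if all its finitely generated submodules are Artinian. -/
def LocallyArtinian (R : Type u) (M : Type v) [Ring R] [AddCommGroup M] [Module R M] : Prop :=
  ∀ N : Submodule R M, N.FG → IsArtinian R N

/-- Property (◇): every finitely generated essential extension of a simple left module
is Artinian. -/
def Diamond (R : Type u) [Ring R] : Prop :=
  ∀ (M : Type v) [AddCommGroup M] [Module R M], Module.Finite R M →
    ∀ E : Submodule R M, IsSimpleModule R E →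
      (∀ N : Submodule R M, N ≠ ⊥ → N ⊓ E ≠ ⊥) → IsArtinian R M

variable {R : Type u} [Ring R] {M : Type v} [AddCommGroup M] [Module R M]

namespace Submodule

theorem exists_maximal_notMem {m : M} (hm : m ≠ 0) :
    ∃ K : Submodule R M, Maximal (fun K => m ∉ K) K := by
  refine zorn_le₀ {K : Submodule R M | m ∉ K} fun c hc hchain => ?_
  rcases c.eq_empty_or_nonempty with rfl | hne
  · exact ⟨⊥, by simpa using hm, by simp⟩
  refine ⟨sSup c, fun hmc => ?_, fun _ => le_sSup⟩
  obtain ⟨K, hKc, hmK⟩ := (mem_sSup_of_directed hne hchain.directedOn).1 hmc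
  exact hc hKc hmK

theorem mkQ_mem_of_maximal_notMem {K : Submodule R M} {m : M} (hK : Maximal (fun K => m ∉ K) K)
    {P : Submodule R (M ⧸ K)} (hP : P ≠ ⊥) : K.mkQ m ∈ P := by
  by_contra hmP
  have hcomap : P.comap K.mkQ ≤ K := hK.2 hmP (by simpa using LinearMap.ker_le_comap K.mkQ)
  apply hP
  rw [eq_bot_iff, ← map_comap_eq_of_surjective K.mkQ_surjective P, ← mkQ_map_self K]
  exact map_mono hcomap

theorem mk_mem_of_forall_ne_bot_mem {x : M} (hx : ∀ P : Submodule R M, P ≠ ⊥ → x ∈ P)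
    {N : Submodule R M} (hxN : x ∈ N) {P : Submodule R N} (hP : P ≠ ⊥) : ⟨x, hxN⟩ ∈ P := by
  have hmap : P.map N.subtype ≠ ⊥ := fun h =>
    hP (map_injective_of_injective N.injective_subtype (by rw [h, map_bot]))
  obtain ⟨⟨y, _⟩, hyP, rfl⟩ := mem_map.1 (hx _ hmap)
  exact hyP

end Submodule

theorem exists_disjoint_ker_proj_comp {ι : Type*} {F : ι → Type*} [∀ i, AddCommGroup (F i)]
    [∀ i, Module R (F i)] {φ : M →ₗ[R] ((i : ι) → F i)} (hφ : Function.Injective φ)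
    {E : Submodule R M} (hE : IsAtom E) :
    ∃ i, Disjoint E (LinearMap.ker ((LinearMap.proj i).comp φ)) := by
  by_contra! h
  have hEker : E ≤ LinearMap.ker φ := fun x hx =>
    funext fun i => hE.not_disjoint_iff_le.1 (h i) hx
  rw [LinearMap.ker_eq_bot.2 hφ, le_bot_iff] at hEker
  exact hE.ne_bot hEker

theorem LocallyArtinian.isArtinian_of_injective {F : Type*} [AddCommGroup F] [Module R F]
    (hF : LocallyArtinian R F) [Module.Finite R M] {f : M →ₗ[R] F} (hf : Function.Injective f) :
    IsArtinian R M :=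
  have := hF (LinearMap.range f) (Module.Finite.iff_fg.1 inferInstance)
  _root_.isArtinian_of_injective (LinearEquiv.ofInjective f hf).toLinearMap
    (LinearEquiv.injective _)

namespace Diamond

theorem isArtinian_of_forall_ne_bot_mem (hD : Diamond.{u, v} R) [Module.Finite R M] {x : M}
    (hx0 : x ≠ 0) (hx : ∀ P : Submodule R M, P ≠ ⊥ → x ∈ P) : IsArtinian R M := by
  have hle : ∀ P : Submodule R M, P ≠ ⊥ → R ∙ x ≤ P := fun P hP =>
    (Submodule.span_singleton_le_iff_mem x P).2 (hx P hP)
  have hbot : (R ∙ x) ≠ ⊥ := by rwa [Ne, Submodule.span_singleton_eq_bot]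
  have hatom : IsAtom (R ∙ x) :=
    ⟨hbot, fun P hP => by_contra fun hP0 => hP.not_ge (hle P hP0)⟩
  refine hD M inferInstance _ (isSimpleModule_iff_isAtom.2 hatom) fun P hP => ?_
  rwa [inf_eq_right.2 (hle P hP)]

theorem locallyArtinian_of_forall_ne_bot_mem (hD : Diamond.{u, v} R) {x : M} (hx0 : x ≠ 0)
    (hx : ∀ P : Submodule R M, P ≠ ⊥ → x ∈ P) : LocallyArtinian R M := by
  intro N hN
  rcases eq_or_ne N ⊥ with rfl | hN0
  · infer_instance
  have : Module.Finite R N := Module.Finite.iff_fg.2 hN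
  have hxN := hx N hN0
  exact hD.isArtinian_of_forall_ne_bot_mem (x := ⟨x, hxN⟩) (by simpa using hx0)
    fun P hP => Submodule.mk_mem_of_forall_ne_bot_mem hx hxN hP

end Diamond

/-- a ring `R` has property (◇) iff every left `R`-module is a subdirect
product of locally Artinian modules. -/
theorem diamond_iff_subdirect (R : Type u) [Ring R] :
    Diamond.{u, v} R ↔
      ∀ (M : Type v) [AddCommGroup M] [Module R M],
        ∃ (ι : Type v) (F : ι → ModuleCat.{v} R) (φ : M →ₗ[R] ((i : ι) → F i)),
          Function.Injective φ ∧ (∀ i, Function.Surjective (fun m => φ m i)) ∧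
            ∀ i, LocallyArtinian R (F i) := by
  constructor
  · intro hD M _ _
    choose K hK using fun m : {m : M // m ≠ 0} => Submodule.exists_maximal_notMem (R := R) m.2
    refine ⟨{m : M // m ≠ 0}, fun m => ModuleCat.of R (M ⧸ K m),
      LinearMap.pi fun m => (K m).mkQ, ?_, fun m => (K m).mkQ_surjective, fun m => ?_⟩
    · rw [← LinearMap.ker_eq_bot, LinearMap.ker_eq_bot']
      intro x hx
      by_contra hx0
      exact (hK ⟨x, hx0⟩).1 ((Submodule.Quotient.mk_eq_zero _).1 (congrFun hx ⟨x, hx0⟩))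
    · refine hD.locallyArtinian_of_forall_ne_bot_mem (x := (K m).mkQ m) ?_
        fun P hP => Submodule.mkQ_mem_of_maximal_notMem (hK m) hP
      simpa using (hK m).1
  · intro h M _ _ _ E hE hess
    obtain ⟨ι, F, φ, hφ, -, hF⟩ := h M
    obtain ⟨i, hi⟩ := exists_disjoint_ker_proj_comp hφ (isSimpleModule_iff_isAtom.1 hE)
    have hker : LinearMap.ker ((LinearMap.proj i).comp φ) = ⊥ := by
      by_contra hker
      exact hess _ hker (disjoint_iff.1 hi.symm)
    exact (hF i).isArtinian_of_injective (LinearMap.ker_eq_bot.1 hker)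
end

section
/- Let A be a Noetherian algebra, E a simple left A-module, and E ≤ M an essential extension. Suppose x is a normal element of A (i.e. xA = Ax) with x ∈ Ann_A(E), and suppose there exists n > 0 with xⁿM = 0. Then M is Artinian if and only if Ann_M(x) = {m ∈ M | xm = 0} is Artinian. -/
/-!
Multiplication by `x` is not `A`-linear, but since `A x ⊆ x A` the set
`x N` of multiples of a submodule `N` is again a submodule. With `K = Ann_M(x)`, the map
`N ↦ (N ⊓ K, x N)` is strictly monotone: `x N` determines `N ⊔ K`, and in the modular lattice
of submodules `N ⊓ K` and `N ⊔ K` determine `N`. So a submodule `P` is Artinian as soon as `K`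
and some Artinian module containing `x P` are, and induction on `n` with `xⁿ P = 0` does the rest.
-/

namespace Submodule

variable {A M : Type*} [Ring A] [AddCommGroup M] [Module A M]
variable {x : A} (hx : ∀ a : A, ∃ b : A, a * x = x * b)

def smulImage (N : Submodule A M) : Submodule A M where
  carrier := {m | ∃ n ∈ N, x • n = m}
  add_mem' := by
    rintro _ _ ⟨n, hn, rfl⟩ ⟨n', hn', rfl⟩
    exact ⟨n + n', add_mem hn hn', smul_add x n n'⟩
  zero_mem' := ⟨0, zero_mem N, smul_zero x⟩
  smul_mem' := by
    rintro a _ ⟨n, hn, rfl⟩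
    obtain ⟨b, hb⟩ := hx a
    exact ⟨b • n, smul_mem N b hn, by rw [← mul_smul, ← hb, mul_smul]⟩

theorem mem_smulImage {N : Submodule A M} {m : M} :
    m ∈ smulImage hx N ↔ ∃ n ∈ N, x • n = m :=
  Iff.rfl

theorem smulImage_mono : Monotone (smulImage (M := M) hx) := by
  rintro N N' hNN' _ ⟨n, hn, rfl⟩
  exact ⟨n, hNN' hn, rfl⟩

variable {K : Submodule A M} (hK : ∀ m : M, m ∈ K ↔ x • m = 0)
include hx hK

theorem le_sup_of_smulImage_le {N N' : Submodule A M}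
    (h : smulImage hx N' ≤ smulImage hx N) : N' ≤ N ⊔ K := by
  intro m hm
  obtain ⟨n, hn, hxn⟩ := (mem_smulImage hx).1 (h ⟨m, hm, rfl⟩)
  have hmn : m - n ∈ K := by rw [hK, smul_sub, hxn, sub_self]
  simpa using add_mem (mem_sup_left hn) (mem_sup_right hmn)

theorem strictMono_inf_prod_smulImage :
    StrictMono fun N : Submodule A M ↦ (N ⊓ K, smulImage hx N) := by
  intro N N' hlt
  refine lt_of_le_not_ge ⟨inf_le_inf_right K hlt.le, smulImage_mono hx hlt.le⟩ ?_
  rintro ⟨hinf, himage⟩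
  have hsup : N' ⊔ K ≤ N ⊔ K := sup_le (le_sup_of_smulImage_le hx hK himage) le_sup_right
  exact hlt.ne (eq_of_le_of_inf_le_of_sup_le hlt.le hinf hsup)

theorem isArtinian_of_smulImage_le [IsArtinian A K] {P Q : Submodule A M} [IsArtinian A Q]
    (hPQ : smulImage hx P ≤ Q) : IsArtinian A P := by
  have : WellFoundedLT (Set.Iic K) := (mapIic K).symm.strictMono.wellFoundedLT
  have : WellFoundedLT (Set.Iic Q) := (mapIic Q).symm.strictMono.wellFoundedLT
  let f : Submodule A P → Set.Iic K × Set.Iic Q := fun N ↦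
    (⟨N.map P.subtype ⊓ K, Set.mem_Iic.2 inf_le_right⟩,
      ⟨smulImage hx (N.map P.subtype), (smulImage_mono hx (map_subtype_le P N)).trans hPQ⟩)
  have hf : StrictMono f := fun _ _ h ↦
    strictMono_inf_prod_smulImage hx hK (map_strictMono_of_injective P.injective_subtype h)
  exact hf.wellFoundedLT

theorem isArtinian_of_pow_smul_eq_zero [IsArtinian A K] (n : ℕ) :
    ∀ P : Submodule A M, (∀ m ∈ P, x ^ n • m = 0) → IsArtinian A P := by
  induction n with
  | zero =>
    intro P hP
    have : P = ⊥ := eq_bot_iff.2 fun m hm ↦ by simpa using hP m hm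
    subst this
    infer_instance
  | succ n ih =>
    intro P hP
    have hQ : ∀ m ∈ smulImage hx P, x ^ n • m = 0 := by
      rintro _ ⟨m, hm, rfl⟩
      rw [← mul_smul, ← pow_succ]
      exact hP m hm
    have := ih _ hQ
    exact isArtinian_of_smulImage_le hx hK le_rfl

end Submodule

theorem artinian_iff_ann_artinian_general
    (A : Type*) [Ring A]
    (M : Type*) [AddCommGroup M] [Module A M]
    (x : A)
    (hnormal : (∀ a : A, ∃ b : A, x * a = b * x) ∧ (∀ a : A, ∃ b : A, a * x = x * b))
    (n : ℕ) (hnil : ∀ m : M, x ^ n • m = 0)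
    (M' : Submodule A M) (hM' : ∀ m : M, m ∈ M' ↔ x • m = 0) :
    IsArtinian A M ↔ IsArtinian A M' := by
  refine ⟨fun _ ↦ inferInstance, fun _ ↦ ?_⟩
  have := Submodule.isArtinian_of_pow_smul_eq_zero hnormal.2 hM' n ⊤ fun m _ ↦ hnil m
  exact isArtinian_of_linearEquiv Submodule.topEquiv

/-- let `A` be a Noetherian algebra, `E ≤ M` an essential extension of a
simple module, `x` a normal element of `A` annihilating `E` with `xⁿM = 0` for some
`n > 0`.  Then `M` is Artinian iff `Ann_M(x) = {m | x • m = 0}` is Artinian. -/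
theorem artinian_iff_ann_artinian
    (A : Type*) [Ring A] [Algebra ℂ A] [IsNoetherianRing A]
    (M : Type*) [AddCommGroup M] [Module A M]
    (E : Submodule A M) (hE : IsSimpleModule A E)
    (hess : ∀ N : Submodule A M, N ≠ ⊥ → N ⊓ E ≠ ⊥)
    (x : A)
    (hnormal : (∀ a : A, ∃ b : A, x * a = b * x) ∧ (∀ a : A, ∃ b : A, a * x = x * b))
    (hann : ∀ e ∈ E, x • e = 0)
    (n : ℕ) (hn : 0 < n) (hnil : ∀ m : M, x ^ n • m = 0)
    (M' : Submodule A M) (hM' : ∀ m : M, m ∈ M' ↔ x • m = 0) :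
    IsArtinian A M ↔ IsArtinian A M' :=
  artinian_iff_ann_artinian_general A M x hnormal n hnil M' hM'
end

section
/- Let A be an algebra over a field k such that every finitely generated essential extension of a simple left A-module is Artinian, and let C be a finite-dimensional k-algebra. Then every finitely generated essential extension of a simple left (C ⊗ A)-module is Artinian. -/
universe u v w

open TensorProduct

/-!
`C ⊗ A` is generated as a left `A`-module by the elements `yᵢ = xᵢ ⊗ 1`, which commute with
`1 ⊗ A`. For an `A`-submodule `P` of a module `M` over such an extension `R` of `A`, the map
`m ↦ (yᵢ • m mod P)ᵢ` is `A`-linear and its kernel is `P.core R`, the largest `R`-submodule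
contained in `P`; so `M` embeds into `(M ⧸ P)ⁿ` as soon as `P` contains no nonzero `R`-submodule.

Let `M` be a finitely generated essential extension of a simple `R`-module `E`. Applied to a
maximal `A`-submodule of `E`, this shows that `E` is Artinian over `A`, so it contains a simple
`A`-submodule `S`. If `K` is maximal among the `A`-submodules of `M` disjoint from `S`, then
`M ⧸ K` is a finitely generated essential extension of the image of `S`, hence Artinian by (◇)
for `A`; and `K` contains no nonzero `R`-submodule, since such a submodule would contain `E`,
hence `S`. So `M` embeds into `(M ⧸ K)ⁿ` and is Artinian over `A`, a fortiori over `R`.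
-/

universe u₁ u₂ u₃

theorem exists_maximal_disjoint {α : Type*} [CompleteLattice α] [IsCompactlyGenerated α] (a : α) :
    ∃ b, Maximal (Disjoint · a) b := by
  obtain ⟨b, -, hb⟩ := zorn_le_nonempty₀ {b | Disjoint b a}
    (fun c hc hchain _ _ => ⟨sSup c, hchain.directedOn.disjoint_sSup_left.2 hc,
      fun _ => le_sSup⟩) ⊥ disjoint_bot_left
  exact ⟨b, hb⟩

namespace Submodule

section Core

variable {A M : Type*} [Semiring A] [AddCommMonoid M] [Module A M]

def core (R : Type*) [Semiring R] [Module R M] (P : Submodule A M) : Submodule R M where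
  carrier := {m | ∀ r : R, r • m ∈ P}
  zero_mem' r := by simpa only [smul_zero] using P.zero_mem
  add_mem' hm hm' r := by simpa only [smul_add] using P.add_mem (hm r) (hm' r)
  smul_mem' r m hm r' := by simpa only [smul_smul] using hm (r' * r)

theorem mem_of_mem_core {R : Type*} [Semiring R] [Module R M] {P : Submodule A M} {m : M}
    (hm : m ∈ P.core R) : m ∈ P := by
  simpa only [one_smul] using hm 1

end Core

variable {A M : Type*} [Ring A] [AddCommGroup M] [Module A M]

theorem isSimpleModule_map_mkQ {S K : Submodule A M} [IsSimpleModule A S] (h : Disjoint K S) :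
    IsSimpleModule A (S.map K.mkQ) := by
  have hinj : Function.Injective (K.mkQ ∘ₗ S.subtype) := by
    rw [← LinearMap.ker_eq_bot, LinearMap.ker_comp, ker_mkQ, ← disjoint_iff_comap_eq_bot]
    exact h.symm
  rw [← range_subtype S, ← LinearMap.range_comp]
  exact .congr (LinearEquiv.ofInjective _ hinj).symm

theorem map_mkQ_inf_ne_bot_of_maximal_disjoint {S K : Submodule A M}
    (hK : Maximal (Disjoint · S) K) {N : Submodule A (M ⧸ K)} (hN : N ≠ ⊥) :
    N ⊓ S.map K.mkQ ≠ ⊥ := by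
  have hlt : K < N.comap K.mkQ := by
    refine lt_of_le_of_ne (fun x hx => ?_) fun h => hN ?_
    · simp [(Quotient.mk_eq_zero K).2 hx]
    · apply comap_injective_of_surjective K.mkQ_surjective
      rw [← h, comap_bot, ker_mkQ]
  obtain ⟨x, ⟨hxN, hxS⟩, hx⟩ :=
    exists_mem_ne_zero_of_ne_bot <| disjoint_iff.not.1 (hK.not_prop_of_gt hlt)
  refine (Submodule.ne_bot_iff _).2 ⟨K.mkQ x, ⟨hxN, mem_map_of_mem hxS⟩, fun h0 => hx ?_⟩
  exact disjoint_def.1 hK.prop x ((Quotient.mk_eq_zero K).1 h0) hxS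

end Submodule

section FiniteCentralizingFamily

variable {A R ι : Type*} {M : Type u₃} [Ring A] [Ring R] [Module A R]
  [AddCommGroup M] [Module R M] [Module A M] [IsScalarTower A R M]

theorem smul_smul_comm_of_mul_smul_comm {s : R} (hs : ∀ (a : A) (r : R), s * a • r = a • (s * r))
    (a : A) (m : M) : s • a • m = a • s • m := by
  rw [← smul_one_smul R a m, smul_smul, hs, mul_one, smul_assoc]

theorem Module.Finite.of_span_range_eq_top [Finite ι] {y : ι → R}
    (hy : Submodule.span A (Set.range y) = ⊤) [Module.Finite R M] : Module.Finite A M :=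
  have : Module.Finite A R := ⟨hy ▸ Submodule.fg_span (Set.finite_range y)⟩
  .trans R M

theorem smul_mem_of_forall_smul_mem {y : ι → R} (hy : Submodule.span A (Set.range y) = ⊤)
    {P : Submodule A M} {m : M} (h : ∀ i, y i • m ∈ P) (r : R) : r • m ∈ P := by
  have hr : r ∈ Submodule.span A (Set.range y) := hy ▸ Submodule.mem_top
  induction hr using Submodule.span_induction with
  | mem _ hx => obtain ⟨i, rfl⟩ := hx; exact h i
  | zero => simpa only [zero_smul] using P.zero_mem
  | add _ _ _ _ h₁ h₂ => simpa only [add_smul] using P.add_mem h₁ h₂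
  | smul a _ _ h => simpa only [smul_assoc] using P.smul_mem a h

theorem isArtinian_of_core_eq_bot [Finite ι] {y : ι → R}
    (hy : Submodule.span A (Set.range y) = ⊤)
    (hcomm : ∀ i (a : A) (r : R), y i * a • r = a • (y i * r))
    {P : Submodule A M} [IsArtinian A (M ⧸ P)] (hP : P.core R = ⊥) : IsArtinian A M := by
  let φ : M →ₗ[A] ι → M ⧸ P := LinearMap.pi fun i => P.mkQ ∘ₗ
    { toFun := (y i • ·)
      map_add' := smul_add (y i)
      map_smul' := smul_smul_comm_of_mul_smul_comm (hcomm i) }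
  refine isArtinian_of_injective φ <| LinearMap.ker_eq_bot.1 <| eq_bot_iff.2 fun m hm => ?_
  have hmP : ∀ i, y i • m ∈ P := fun i => (Submodule.Quotient.mk_eq_zero P).1 (congrFun hm i)
  have : m ∈ P.core R := smul_mem_of_forall_smul_mem hy hmP
  rwa [hP] at this

theorem IsSimpleModule.isArtinian_of_span_range_eq_top [Finite ι] {y : ι → R}
    (hy : Submodule.span A (Set.range y) = ⊤)
    (hcomm : ∀ i (a : A) (r : R), y i * a • r = a • (y i * r))
    [IsSimpleModule R M] : IsArtinian A M := by
  have : Module.Finite A M := .of_span_range_eq_top hy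
  have : Nontrivial M := IsSimpleModule.nontrivial R M
  obtain ⟨P, hP⟩ := IsCoatomic.exists_coatom (Submodule A M)
  have : IsSimpleModule A (M ⧸ P) := isSimpleModule_iff_isCoatom.2 hP
  refine isArtinian_of_core_eq_bot hy hcomm <|
    (eq_bot_or_eq_top (P.core R)).resolve_right fun htop => hP.1 ?_
  exact eq_top_iff.2 fun m _ => Submodule.mem_of_mem_core (htop ▸ Submodule.mem_top)

theorem Diamond.isArtinian_of_essential_simple (hA : Diamond.{_, u₃} A) [Finite ι] {y : ι → R}
    (hy : Submodule.span A (Set.range y) = ⊤)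
    (hcomm : ∀ i (a : A) (r : R), y i * a • r = a • (y i * r)) [Module.Finite R M]
    (E : Submodule R M) [hE : IsSimpleModule R E] (hess : ∀ N : Submodule R M, N ≠ ⊥ → N ⊓ E ≠ ⊥) :
    IsArtinian A M := by
  have : Module.Finite A M := .of_span_range_eq_top hy
  have : IsArtinian A E := IsSimpleModule.isArtinian_of_span_range_eq_top hy hcomm
  have : Nontrivial E := IsSimpleModule.nontrivial R E
  obtain ⟨S', hS'⟩ := IsAtomic.exists_atom (Submodule A E)
  have : IsSimpleModule A S' := isSimpleModule_iff_isAtom.2 hS'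
  set S := S'.map (E.subtype.restrictScalars A)
  have hS : IsSimpleModule A S :=
    .congr (Submodule.equivMapOfInjective (E.subtype.restrictScalars A) E.injective_subtype S').symm
  have hSE : ∀ x ∈ S, x ∈ E := by
    rintro _ ⟨x, -, rfl⟩
    exact x.2
  obtain ⟨K, hK⟩ := exists_maximal_disjoint S
  have : IsArtinian A (M ⧸ K) := hA _ inferInstance _ (Submodule.isSimpleModule_map_mkQ hK.prop)
    fun N hN => Submodule.map_mkQ_inf_ne_bot_of_maximal_disjoint hK hN
  refine isArtinian_of_core_eq_bot hy hcomm (P := K) ?_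
  by_contra hne
  have hEK : E ≤ K.core R := (isSimpleModule_iff_isAtom.1 hE).not_disjoint_iff_le.1
    fun h => hess _ hne (disjoint_iff.1 h.symm)
  have hSK : S ≤ K := fun x hx => Submodule.mem_of_mem_core (hEK (hSE x hx))
  exact (isSimpleModule_iff_isAtom.1 hS).1 (disjoint_self.1 (hK.prop.mono_left hSK))

end FiniteCentralizingFamily

theorem Diamond.of_finite_centralizing_extension {A : Type u₁} {R : Type u₂} [Ring A] [Ring R]
    (f : A →+* R) {ι : Type*} [Fintype ι] (y : ι → R) (hcomm : ∀ i a, Commute (f a) (y i))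
    (hspan : ∀ r, ∃ a : ι → A, r = ∑ i, f (a i) * y i)
    (hA : Diamond.{u₁, u₃} A) : Diamond.{u₂, u₃} R := by
  intro M _ _ _ E hE hess
  let : Module A R := Module.compHom R f
  let : Module A M := Module.compHom M f
  have : IsScalarTower A R M := ⟨fun a r m => mul_smul (f a) r m⟩
  have hy : Submodule.span A (Set.range y) = ⊤ := eq_top_iff.2 fun r _ => by
    obtain ⟨a, rfl⟩ := hspan r
    exact Submodule.sum_mem _ fun i _ => Submodule.smul_mem _ (a i) (Submodule.subset_span ⟨i, rfl⟩)
  exact isArtinian_of_tower A <|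
    hA.isArtinian_of_essential_simple hy (fun i a r => (hcomm i a).symm.left_comm r) E hess

/-- if an algebra `A` over a field `k` satisfies (◇) and `C` is a
finite-dimensional `k`-algebra, then `C ⊗ₖ A` satisfies (◇). -/
theorem diamond_tensor_finiteDimensional (k : Type u) [Field k]
    (A : Type v) [Ring A] [Algebra k A]
    (C : Type w) [Ring C] [Algebra k C] [FiniteDimensional k C]
    (hA : Diamond.{v, max v w} A) :
    Diamond.{max v w, max v w} (C ⊗[k] A) := by
  let b := Module.finBasis k C
  refine Diamond.of_finite_centralizing_extension Algebra.TensorProduct.includeRight.toRingHom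
    (fun i => b i ⊗ₜ[k] (1 : A)) (fun i a => ?_) (fun x => ?_) hA
  · simp [Commute, SemiconjBy, Algebra.TensorProduct.tmul_mul_tmul]
  · obtain ⟨c, rfl⟩ := TensorProduct.eq_repr_basis_left b x
    exact ⟨c, by simp [Finsupp.sum_fintype, Algebra.TensorProduct.tmul_mul_tmul]⟩
end

section
/- Let A be an algebra over a superalgebra A = A₀ ⊕ A₁ with homogeneous superderivations ∂₁, ..., ∂_l, each locally nilpotent, such that ⋂ᵢ ker ∂ᵢ is contained in the supercenter of A, and for all i ≤ j there exists λ_{i,j} ∈ ℂ with ∂ᵢ∂ⱼ − λ_{i,j}∂ⱼ∂ᵢ ∈ span{∂₁,...,∂_{i−1}}. Then every nonzero ideal I of A with ∂ᵢ(I) ⊆ I for all i contains a nonzero element of the supercenter of A. -/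
/-!
Descend along `D₀, …, D_{l-1}`. If `x ≠ 0` lies in the stable ideal and is killed by every `D_s`
with `s < k`, the relation `D_i D_k − λ D_k D_i ∈ span {D_s | s < i}` shows that `D_k` preserves
this common kernel; applying `D_k` as often as possible without reaching `0` (local nilpotence)
gives a nonzero element of the ideal killed by every `D_s` with `s ≤ k`. After `l` steps the
element lies in `⋂ ker D_i`, which is contained in the supercenter.
-/

open DirectSum

/-- The supercommutator `⟦a,b⟧` of two arbitrary elements of a superalgebra, defined by
bilinear extension of `⟦a,b⟧ = ab − (−1)^{|a||b|}ba` via the homogeneous decomposition. -/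
noncomputable def superCommGen {A : Type*} [Ring A] [Algebra ℂ A]
    (𝒜 : ZMod 2 → Submodule ℂ A) [GradedAlgebra 𝒜] (a b : A) : A :=
  ∑ i : ZMod 2, ∑ j : ZMod 2,
    ((DirectSum.decompose 𝒜 a i : A) * (DirectSum.decompose 𝒜 b j : A)
      - ((-1 : ℂ) ^ (i.val * j.val)) •
        ((DirectSum.decompose 𝒜 b j : A) * (DirectSum.decompose 𝒜 a i : A)))

/-- Membership in the supercenter `SZ(A) = {a | ⟦a,b⟧ = 0 ∀ b}`. -/
noncomputable def InSupercenter {A : Type*} [Ring A] [Algebra ℂ A]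
    (𝒜 : ZMod 2 → Submodule ℂ A) [GradedAlgebra 𝒜] (a : A) : Prop :=
  ∀ b : A, superCommGen 𝒜 a b = 0

theorem Function.exists_iterate_ne_zero_and_apply_eq_zero {M : Type*} [Zero M] (f : M → M)
    {x : M} (hx : x ≠ 0) {n : ℕ} (hn : f^[n] x = 0) : ∃ m, f^[m] x ≠ 0 ∧ f (f^[m] x) = 0 := by
  induction n with
  | zero => exact absurd hn hx
  | succ n ih =>
    by_cases h : f^[n] x = 0
    · exact ih h
    · exact ⟨n, h, by rwa [← Function.iterate_succ_apply' f n x]⟩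

section CommonKernel

variable {R M : Type*} [CommSemiring R] [AddCommGroup M] [Module R M] {l : ℕ}

def commonKerBelow (D : Fin l → Module.End R M) (k : ℕ) : Submodule R M :=
  ⨅ (i : Fin l) (_ : (i : ℕ) < k), LinearMap.ker (D i)

variable {D : Fin l → Module.End R M}

theorem mem_commonKerBelow {k : ℕ} {x : M} :
    x ∈ commonKerBelow D k ↔ ∀ i : Fin l, (i : ℕ) < k → D i x = 0 := by
  simp [commonKerBelow, Submodule.mem_iInf]

theorem mem_commonKerBelow_succ {k : ℕ} (hk : k < l) {x : M} :
    x ∈ commonKerBelow D (k + 1) ↔ x ∈ commonKerBelow D k ∧ D ⟨k, hk⟩ x = 0 := by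
  simp only [mem_commonKerBelow, Nat.lt_succ_iff_lt_or_eq, or_imp, forall_and]
  refine and_congr_right fun _ => ⟨fun h => h _ rfl, fun h i hi => ?_⟩
  rwa [show i = ⟨k, hk⟩ from Fin.ext hi]

theorem apply_mem_commonKerBelow {k : Fin l}
    (hrel : ∀ i < k, ∃ (lam : R) (μ : Fin l → R),
      D i ∘ₗ D k - lam • (D k ∘ₗ D i) = ∑ s ∈ Finset.univ.filter (· < i), μ s • D s)
    {x : M} (hx : x ∈ commonKerBelow D k) : D k x ∈ commonKerBelow D k := by
  rw [mem_commonKerBelow] at hx ⊢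
  intro i hi
  obtain ⟨lam, μ, h⟩ := hrel i hi
  have hsum : ∑ s ∈ Finset.univ.filter (· < i), μ s • D s x = 0 :=
    Finset.sum_eq_zero fun s hs => by
      rw [hx s ((Finset.mem_filter.1 hs).2.trans hi), smul_zero]
  have hx' := LinearMap.congr_fun h x
  simp only [LinearMap.sub_apply, LinearMap.comp_apply, LinearMap.smul_apply,
    LinearMap.sum_apply, hx i hi, map_zero, smul_zero, sub_zero] at hx'
  rw [hx', hsum]

theorem exists_ne_zero_mem_commonKerBelow {S : Set M} (hS : ∀ i, Set.MapsTo (D i) S S)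
    (hln : ∀ i (x : M), ∃ n : ℕ, (D i ^ n) x = 0)
    (hrel : ∀ i j : Fin l, i < j → ∃ (lam : R) (μ : Fin l → R),
      D i ∘ₗ D j - lam • (D j ∘ₗ D i) = ∑ s ∈ Finset.univ.filter (· < i), μ s • D s)
    {x : M} (hxS : x ∈ S) (hx : x ≠ 0) :
    ∀ k ≤ l, ∃ y ∈ S, y ≠ 0 ∧ y ∈ commonKerBelow D k := by
  intro k
  induction k with
  | zero => exact fun _ => ⟨x, hxS, hx, by simp [mem_commonKerBelow]⟩
  | succ k ih =>
    intro hk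
    obtain ⟨y, hyS, hy, hyK⟩ := ih (Nat.le_of_succ_le hk)
    have hmaps : Set.MapsTo (D ⟨k, hk⟩) (S ∩ commonKerBelow D k) (S ∩ commonKerBelow D k) :=
      fun z hz => ⟨hS _ hz.1,
        apply_mem_commonKerBelow (k := ⟨k, hk⟩) (fun i hi => hrel i ⟨k, hk⟩ hi) hz.2⟩
    obtain ⟨n, hn⟩ := hln ⟨k, hk⟩ y
    rw [Module.End.pow_apply] at hn
    obtain ⟨m, hm, hDm⟩ := Function.exists_iterate_ne_zero_and_apply_eq_zero (D ⟨k, hk⟩) hy hn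
    obtain ⟨hmS, hmK⟩ := hmaps.iterate m ⟨hyS, hyK⟩
    exact ⟨_, hmS, hm, (mem_commonKerBelow_succ hk).2 ⟨hmK, hDm⟩⟩

end CommonKernel

theorem stable_ideal_meets_supercenter_general {A : Type*} [Ring A] [Algebra ℂ A]
    (𝒜 : ZMod 2 → Submodule ℂ A) [GradedAlgebra 𝒜]
    (l : ℕ) (D : Fin l → (A →ₗ[ℂ] A))
    (hln : ∀ i (a : A), ∃ n : ℕ, ((D i) ^ n) a = 0)
    (hker : ∀ a : A, (∀ i, D i a = 0) → InSupercenter 𝒜 a)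
    (hrel : ∀ i j : Fin l, i ≤ j → ∃ (lam : ℂ) (μ : Fin l → ℂ),
      D i ∘ₗ D j - lam • (D j ∘ₗ D i) = ∑ s ∈ Finset.univ.filter (· < i), μ s • D s)
    (I : TwoSidedIdeal A) (hI : I ≠ ⊥) (hstable : ∀ i, ∀ a ∈ I, D i a ∈ I) :
    ∃ a ∈ I, a ≠ 0 ∧ InSupercenter 𝒜 a := by
  obtain ⟨x, hxI, hx⟩ : ∃ x ∈ I, x ≠ 0 := by
    by_contra! h
    exact hI (eq_bot_iff.2 fun x hx => (TwoSidedIdeal.mem_bot A).2 (h x hx))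
  obtain ⟨a, haI, ha, haK⟩ := exists_ne_zero_mem_commonKerBelow (S := (I : Set A)) hstable hln
    (fun i j hij => hrel i j hij.le) hxI hx l le_rfl
  exact ⟨a, haI, ha, hker a fun i => mem_commonKerBelow.1 haK i i.isLt⟩

/-- a superalgebra with locally nilpotent homogeneous superderivations
`D₁, ..., D_l` whose common kernel lies in the supercenter and which satisfy
`DᵢDⱼ − λ_{i,j}DⱼDᵢ ∈ span{D₁,...,D_{i−1}}` has the property that every nonzero
`D`-stable two-sided ideal contains a nonzero supercentral element. -/
theorem stable_ideal_meets_supercenter {A : Type*} [Ring A] [Algebra ℂ A]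
    (𝒜 : ZMod 2 → Submodule ℂ A) [GradedAlgebra 𝒜]
    (l : ℕ) (D : Fin l → (A →ₗ[ℂ] A)) (d : Fin l → ZMod 2)
    (hgr : ∀ i (j : ZMod 2), ∀ a ∈ 𝒜 j, D i a ∈ 𝒜 (j + d i))
    (hder : ∀ i (j k : ZMod 2), ∀ a ∈ 𝒜 j, ∀ b ∈ 𝒜 k,
      D i (a * b) = D i a * b + ((-1 : ℂ) ^ ((d i).val * j.val)) • (a * D i b))
    (hln : ∀ i (a : A), ∃ n : ℕ, ((D i) ^ n) a = 0)
    (hker : ∀ a : A, (∀ i, D i a = 0) → InSupercenter 𝒜 a)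
    (hrel : ∀ i j : Fin l, i ≤ j → ∃ (lam : ℂ) (μ : Fin l → ℂ),
      D i ∘ₗ D j - lam • (D j ∘ₗ D i) = ∑ s ∈ Finset.univ.filter (· < i), μ s • D s)
    (I : TwoSidedIdeal A) (hI : I ≠ ⊥) (hstable : ∀ i, ∀ a ∈ I, D i a ∈ I) :
    ∃ a ∈ I, a ≠ 0 ∧ InSupercenter 𝒜 a :=
  stable_ideal_meets_supercenter_general 𝒜 l D hln hker hrel I hI hstable
end

section
/- Let g be a finite-dimensional nilpotent Lie algebra over ℂ with lower central series refined to a chain of ideals g = gⁿ ⊃ gⁿ⁻¹ ⊃ ... ⊃ g¹ ⊃ g⁰ = 0 with [g, gⁱ] ⊆ gⁱ⁻¹ and dim(gⁱ/gⁱ⁻¹) = 1. Then every nonzero ideal of U(g) contains a nonzero central element of U(g). -/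
/-!
For `x ∈ g`, `ad (ι x)` is a derivation of `U(g)` that is nilpotent on the generators `ι g`
(because `ad x` is nilpotent on `g`), hence locally nilpotent on all of `U(g)`, and it preserves
every two-sided ideal `I`. If a nonzero `a ∈ I` commutes with `ι gⁱ` and `z ∈ gⁱ⁺¹`, then
`[g, z] ⊆ gⁱ` and the Jacobi identity show that the elements of `I` commuting with `ι gⁱ` form a
subspace stable under `ad (ι z)`; the last nonzero iterate `(ad (ι z))ᵐ a` lies in it and also
commutes with `ι z`. Treating the finitely many generators of each `gⁱ⁺¹` in turn, one climbs the
chain up to a nonzero element of `I` commuting with `ι g`, which generates `U(g)`.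
-/

open Module

open LieAlgebra UniversalEnvelopingAlgebra

attribute [local instance] LieRing.ofAssociativeRing

theorem Module.End.exists_ne_zero_mem_apply_eq_zero {R M : Type*} [Semiring R] [AddCommMonoid M]
    [Module R M] {f : Module.End R M} {s : Set M} (hs : Set.MapsTo f s s) {v : M} (hv : v ∈ s)
    (hv0 : v ≠ 0) {k : ℕ} (hk : (f ^ k) v = 0) : ∃ w ∈ s, w ≠ 0 ∧ f w = 0 := by
  induction k generalizing v with
  | zero => exact absurd hk hv0
  | succ k ih =>
    by_cases hfv : f v = 0
    · exact ⟨v, hv, hv0, hfv⟩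
    · exact ih (hs hv) hfv (by rwa [pow_succ, Module.End.mul_apply] at hk)

namespace LieAlgebra

variable {R A : Type*} [CommRing R] [Ring A] [Algebra R A]

theorem ad_mul (u a b : A) : ad R A u (a * b) = ad R A u a * b + a * ad R A u b := by
  simp only [ad_apply, Ring.lie_def]
  noncomm_ring

theorem ad_pow_add_apply_mul_eq_zero {u a b : A} {p q : ℕ} (ha : (ad R A u ^ p) a = 0)
    (hb : (ad R A u ^ q) b = 0) : (ad R A u ^ (p + q)) (a * b) = 0 := by
  induction p generalizing a q b with
  | zero => simp_all
  | succ p ihp =>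
    induction q generalizing b with
    | zero => simp_all
    | succ q ihq =>
      have hDa : (ad R A u ^ p) (ad R A u a) = 0 := by rwa [pow_succ, Module.End.mul_apply] at ha
      have hDb : (ad R A u ^ q) (ad R A u b) = 0 := by rwa [pow_succ, Module.End.mul_apply] at hb
      rw [show p + 1 + (q + 1) = p + 1 + q + 1 by omega, pow_succ, Module.End.mul_apply, ad_mul,
        map_add, ihq hDb, add_zero, show p + 1 + q = p + (q + 1) by omega, ihp hDa hb]

variable (R) in
def adLocallyNilpotentSubalgebra (u : A) : Subalgebra R A where
  carrier := {a | ∃ k, (ad R A u ^ k) a = 0}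
  mul_mem' := fun ⟨_, hp⟩ ⟨_, hq⟩ => ⟨_, ad_pow_add_apply_mul_eq_zero hp hq⟩
  add_mem' := fun ⟨p, hp⟩ ⟨q, hq⟩ => ⟨max p q, by
    rw [map_add, Module.End.pow_map_zero_of_le (le_max_left p q) hp,
      Module.End.pow_map_zero_of_le (le_max_right p q) hq, add_zero]⟩
  algebraMap_mem' r := ⟨1, by simp [Ring.lie_def, Algebra.commutes]⟩

end LieAlgebra

namespace UniversalEnvelopingAlgebra

variable {R L : Type*} [CommRing R] [LieRing L] [LieAlgebra R L]

local notation "𝒰" => UniversalEnvelopingAlgebra R L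

theorem adjoin_range_ι : Algebra.adjoin R (Set.range (ι R : L → 𝒰)) = ⊤ := by
  have : Set.range (ι R : L → 𝒰) = mkAlgHom R L '' Set.range (TensorAlgebra.ι R) := by
    rw [← Set.range_comp]; rfl
  rw [this, ← AlgHom.map_adjoin, TensorAlgebra.adjoin_range_ι, Algebra.map_top,
    AlgHom.range_eq_top]
  exact RingCon.mkₐ_surjective _

theorem ad_ι_pow_ι (x y : L) (k : ℕ) :
    (ad R 𝒰 (ι R x) ^ k) (ι R y) = ι R ((ad R L x ^ k) y) := by
  induction k with
  | zero => rfl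
  | succ k ih =>
    rw [pow_succ', pow_succ', Module.End.mul_apply, Module.End.mul_apply, ih, ad_apply, ad_apply,
      LieHom.map_lie]

theorem exists_ad_ι_pow_apply_eq_zero {x : L} (hx : IsNilpotent (ad R L x)) (a : 𝒰) :
    ∃ k, (ad R 𝒰 (ι R x) ^ k) a = 0 := by
  obtain ⟨k, hk⟩ := hx
  have : Algebra.adjoin R (Set.range (ι R : L → 𝒰)) ≤ adLocallyNilpotentSubalgebra R (ι R x) :=
    Algebra.adjoin_le <| by
      rintro _ ⟨y, rfl⟩
      exact ⟨k, by rw [ad_ι_pow_ι, hk, LinearMap.zero_apply, map_zero]⟩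
  rw [adjoin_range_ι] at this
  exact this Algebra.mem_top

def ιCentralizer (a : 𝒰) : Submodule R L :=
  (Subalgebra.centralizer R {a}).toSubmodule.comap (ι R : L →ₗ⁅R⁆ 𝒰).toLinearMap

theorem mem_ιCentralizer {a : 𝒰} {y : L} : y ∈ ιCentralizer a ↔ ⁅ι R y, a⁆ = 0 := by
  simp only [ιCentralizer, Submodule.mem_comap, Subalgebra.mem_toSubmodule,
    Subalgebra.mem_centralizer_iff, Set.mem_singleton_iff, forall_eq, Ring.lie_def, sub_eq_zero]
  exact eq_comm

theorem mul_comm_of_ιCentralizer_eq_top {a : 𝒰} (h : ιCentralizer a = ⊤) (b : 𝒰) :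
    a * b = b * a := by
  have : Algebra.adjoin R (Set.range (ι R : L → 𝒰)) ≤ Subalgebra.centralizer R {a} :=
    Algebra.adjoin_le <| by
      rintro _ ⟨y, rfl⟩
      exact (h ▸ Submodule.mem_top : y ∈ ιCentralizer a)
  rw [adjoin_range_ι] at this
  exact (Subalgebra.mem_centralizer_iff R).1 (this Algebra.mem_top) a rfl

def HasNonzeroCommutingElement (I : TwoSidedIdeal 𝒰) (s : Submodule R L) : Prop :=
  ∃ a ∈ I, a ≠ 0 ∧ s ≤ ιCentralizer a

theorem mapsTo_ad_ι (I : TwoSidedIdeal 𝒰) {s : Submodule R L} {x : L}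
    (hsx : ∀ y ∈ s, ⁅y, x⁆ ∈ s) :
    Set.MapsTo (ad R 𝒰 (ι R x)) {a | a ∈ I ∧ s ≤ ιCentralizer a}
      {a | a ∈ I ∧ s ≤ ιCentralizer a} := by
  rintro a ⟨haI, has⟩
  refine ⟨?_, fun y hy => ?_⟩
  · rw [ad_apply, Ring.lie_def]
    exact I.sub_mem (I.mul_mem_left _ _ haI) (I.mul_mem_right _ _ haI)
  · rw [mem_ιCentralizer, ad_apply, leibniz_lie, ← LieHom.map_lie,
      mem_ιCentralizer.1 (has (hsx y hy)), mem_ιCentralizer.1 (has hy), lie_zero, zero_add]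

theorem HasNonzeroCommutingElement.mono {I : TwoSidedIdeal 𝒰} {s t : Submodule R L}
    (h : HasNonzeroCommutingElement I s) (hts : t ≤ s) : HasNonzeroCommutingElement I t :=
  let ⟨a, haI, ha0, has⟩ := h
  ⟨a, haI, ha0, hts.trans has⟩

theorem HasNonzeroCommutingElement.sup_span_singleton {I : TwoSidedIdeal 𝒰} {s : Submodule R L}
    {x : L} (hx : IsNilpotent (ad R L x)) (hsx : ∀ y ∈ s, ⁅y, x⁆ ∈ s)
    (h : HasNonzeroCommutingElement I s) : HasNonzeroCommutingElement I (s ⊔ R ∙ x) := by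
  obtain ⟨a, haI, ha0, has⟩ := h
  obtain ⟨k, hk⟩ := exists_ad_ι_pow_apply_eq_zero hx a
  obtain ⟨b, ⟨hbI, hbs⟩, hb0, hbx⟩ :=
    Module.End.exists_ne_zero_mem_apply_eq_zero (mapsTo_ad_ι I hsx) ⟨haI, has⟩ ha0 hk
  exact ⟨b, hbI, hb0,
    sup_le hbs ((Submodule.span_singleton_le_iff_mem _ _).2 (mem_ιCentralizer.2 hbx))⟩

theorem HasNonzeroCommutingElement.sup_of_fg {I : TwoSidedIdeal 𝒰}
    (had : ∀ x : L, IsNilpotent (ad R L x)) {t : Submodule R L} (ht : t.FG) {s : Submodule R L}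
    (hts : ∀ y : L, ∀ z ∈ t, ⁅y, z⁆ ∈ s) (h : HasNonzeroCommutingElement I s) :
    HasNonzeroCommutingElement I (s ⊔ t) := by
  induction t, ht using Submodule.fg_induction generalizing s with
  | singleton x =>
    exact h.sup_span_singleton (had x) fun y _ => hts y x (Submodule.mem_span_singleton_self x)
  | sup t₁ t₂ _ _ ih₁ ih₂ =>
    rw [← sup_assoc]
    exact ih₂ (fun y z hz => Submodule.mem_sup_left (hts y z (Submodule.mem_sup_right hz)))
      (ih₁ (fun y z hz => hts y z (Submodule.mem_sup_left hz)) h)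

end UniversalEnvelopingAlgebra

theorem ideal_contains_central_general (g : Type*) [LieRing g] [LieAlgebra ℂ g]
    [FiniteDimensional ℂ g] [LieRing.IsNilpotent g]
    (n : ℕ) (N : ℕ → LieIdeal ℂ g)
    (hbot : N 0 = ⊥) (htop : N n = ⊤)
    (hcentral : ∀ i < n, ∀ x : g, ∀ y ∈ N (i + 1), ⁅x, y⁆ ∈ N i)
    (I : TwoSidedIdeal (UniversalEnvelopingAlgebra ℂ g)) (hI : I ≠ ⊥) :
    ∃ a ∈ I, a ≠ 0 ∧ ∀ b : UniversalEnvelopingAlgebra ℂ g, a * b = b * a := by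
  have had (x : g) : IsNilpotent (ad ℂ g x) := LieModule.isNilpotent_toEnd_of_isNilpotent ℂ g g x
  have hchain : ∀ i ≤ n, HasNonzeroCommutingElement I (N i : Submodule ℂ g) := by
    intro i hi
    induction i with
    | zero =>
      obtain ⟨a, haI, ha0⟩ := SetLike.exists_of_lt (bot_lt_iff_ne_bot.2 hI)
      exact ⟨a, haI, mt (TwoSidedIdeal.mem_bot _).2 ha0, by simp [hbot]⟩
    | succ i ih =>
      exact (HasNonzeroCommutingElement.sup_of_fg had (IsNoetherian.noetherian _)
        (hcentral i hi) (ih (by omega))).mono le_sup_right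
  obtain ⟨a, haI, ha0, hg⟩ := hchain n le_rfl
  exact ⟨a, haI, ha0, mul_comm_of_ιCentralizer_eq_top (top_unique (by simpa [htop] using hg))⟩

/-- let `g` be a finite-dimensional nilpotent complex Lie algebra with a
refined central series `g = gⁿ ⊃ ... ⊃ g⁰ = 0`, `[g, gⁱ] ⊆ gⁱ⁻¹`, `dim(gⁱ/gⁱ⁻¹) = 1`.
Then every nonzero two-sided ideal of `U(g)` contains a nonzero central element. -/
theorem ideal_contains_central (g : Type*) [LieRing g] [LieAlgebra ℂ g]
    [FiniteDimensional ℂ g] [LieRing.IsNilpotent g]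
    (n : ℕ) (N : ℕ → LieIdeal ℂ g)
    (hbot : N 0 = ⊥) (htop : N n = ⊤)
    (hdim : ∀ i < n, finrank ℂ (N (i + 1)) = finrank ℂ (N i) + 1)
    (hcentral : ∀ i < n, ∀ x : g, ∀ y ∈ N (i + 1), ⁅x, y⁆ ∈ N i)
    (I : TwoSidedIdeal (UniversalEnvelopingAlgebra ℂ g)) (hI : I ≠ ⊥) :
    ∃ a ∈ I, a ≠ 0 ∧ ∀ b : UniversalEnvelopingAlgebra ℂ g, a * b = b * a :=
  ideal_contains_central_general g n N hbot htop hcentral I hI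
end

section
/- Let g be a Lie algebra over ℂ with basis {e₁,...,eₙ} such that the span a of {e₃,...,eₙ} is an abelian ideal of codimension 2, and suppose [e₂, eᵢ] = 0 for some i ≥ 3 with [e₁, eᵢ] ≠ 0 and there is j ≥ 3, j ≠ i, with [e₂, eⱼ] ≠ 0 and [e₁,eᵢ], [e₂,eⱼ] linearly independent. Then ind(g) ≤ dim(g) − 3. -/
open Module

/-- The orthogonal of a linear functional `f` with respect to the bilinear form
`(x, y) ↦ f ⁅x, y⁆`, i.e. `g^f = {x ∈ g | f [x,y] = 0 for all y}`. -/
def stabilizer {g : Type*} [LieRing g] [LieAlgebra ℂ g] (f : Module.Dual ℂ g) :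
    Submodule ℂ g where
  carrier := {x | ∀ y, f ⁅x, y⁆ = 0}
  add_mem' := by intro a b ha hb y; simp [add_lie, ha y, hb y]
  zero_mem' := by intro y; simp
  smul_mem' := by intro c a ha y; simp [smul_lie, ha y]

/-- The index of a Lie algebra: `ind g = min_{f ∈ g*} dim g^f`. -/
noncomputable def lieIndex (g : Type*) [LieRing g] [LieAlgebra ℂ g] : ℕ :=
  ⨅ f : Module.Dual ℂ g, finrank ℂ (stabilizer f)

/-!
Choose `f` with `f ⁅e₁, eᵢ⁆ = f ⁅e₂, eⱼ⁆ = 1`. The functionals `x ↦ f ⁅x, y⁆` for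
`y = eᵢ, eⱼ, e₁` all vanish on `g^f`, and they are linearly independent because pairing them
with `e₁, e₂, eᵢ` gives a triangular matrix with diagonal `1, 1, -1`: here `[e₂, eᵢ] = 0` and
`[eᵢ, eⱼ] = 0` make the entries below the diagonal vanish. Hence `g^f` has codimension at least 3.
-/

open Matrix

section

variable {g : Type*} [LieRing g] [LieAlgebra ℂ g]

def lieFormEval (f : Dual ℂ g) {k : ℕ} (y : Fin k → g) : g →ₗ[ℂ] Fin k → ℂ where
  toFun x m := f ⁅x, y m⁆
  map_add' a b := by ext m; simp [add_lie]
  map_smul' c a := by ext m; simp [smul_lie]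

lemma stabilizer_le_ker_lieFormEval (f : Dual ℂ g) {k : ℕ} (y : Fin k → g) :
    stabilizer f ≤ LinearMap.ker (lieFormEval f y) :=
  fun _ hx ↦ funext fun m ↦ hx (y m)

lemma lieFormEval_sum_smul (f : Dual ℂ g) {k : ℕ} (x y : Fin k → g) (c : Fin k → ℂ) :
    lieFormEval f y (∑ a, c a • x a) = c ᵥ* Matrix.of fun a b ↦ f ⁅x a, y b⁆ := by
  ext m
  simp [lieFormEval, vecMul, dotProduct]

lemma lieFormEval_surjective_of_det_ne_zero (f : Dual ℂ g) {k : ℕ} (x y : Fin k → g)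
    (hdet : (Matrix.of fun a b ↦ f ⁅x a, y b⁆).det ≠ 0) :
    Function.Surjective (lieFormEval f y) := by
  intro w
  obtain ⟨c, hc⟩ := vecMul_surjective_iff_isUnit.mpr
    ((isUnit_iff_isUnit_det _).mpr hdet.isUnit) w
  exact ⟨∑ a, c a • x a, (lieFormEval_sum_smul f x y c).trans hc⟩

lemma finrank_stabilizer_le_of_surjective [FiniteDimensional ℂ g] (f : Dual ℂ g) {k : ℕ}
    (y : Fin k → g) (hsurj : Function.Surjective (lieFormEval f y)) :
    finrank ℂ (stabilizer f) ≤ finrank ℂ g - k := by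
  have hrank := LinearMap.finrank_range_add_finrank_ker (lieFormEval f y)
  rw [LinearMap.range_eq_top.mpr hsurj, finrank_top, finrank_fin_fun] at hrank
  have := Submodule.finrank_mono (stabilizer_le_ker_lieFormEval f y)
  omega

lemma lieIndex_le_finrank_stabilizer (f : Dual ℂ g) : lieIndex g ≤ finrank ℂ (stabilizer f) :=
  ciInf_le (OrderBot.bddBelow _) f

lemma lieIndex_le_of_det_ne_zero [FiniteDimensional ℂ g] (f : Dual ℂ g) {k : ℕ}
    (x y : Fin k → g) (hdet : (Matrix.of fun a b ↦ f ⁅x a, y b⁆).det ≠ 0) :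
    lieIndex g ≤ finrank ℂ g - k :=
  (lieIndex_le_finrank_stabilizer f).trans <|
    finrank_stabilizer_le_of_surjective f y (lieFormEval_surjective_of_det_ne_zero f x y hdet)

end

/-- let `g` have a basis `e₁,...,eₙ` (here `0`-indexed) whose tail
`e₃,...,eₙ` spans an abelian ideal `a` of codimension 2, and suppose for some
`i, j ≥ 3`, `i ≠ j`: `[e₂,eᵢ] = 0`, `[e₁,eᵢ] ≠ 0`, `[e₂,eⱼ] ≠ 0` with
`[e₁,eᵢ], [e₂,eⱼ]` linearly independent.  Then `ind(g) ≤ dim(g) − 3`. -/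
theorem index_le_of_nontriangular (g : Type*) [LieRing g] [LieAlgebra ℂ g]
    (n : ℕ) (hn : 2 ≤ n) (e : Basis (Fin n) ℂ g)
    (habelian : ∀ p q : Fin n, 2 ≤ p.val → 2 ≤ q.val → ⁅e p, e q⁆ = 0)
    (i j : Fin n) (hi : 2 ≤ i.val) (hj : 2 ≤ j.val)
    (h2i : ⁅e ⟨1, by omega⟩, e i⁆ = 0)
    (hindep : LinearIndependent ℂ ![⁅e ⟨0, by omega⟩, e i⁆, ⁅e ⟨1, by omega⟩, e j⁆]) :
    lieIndex g ≤ Module.finrank ℂ g - 3 := by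
  have : FiniteDimensional ℂ g := .of_basis e
  set e₁ := e ⟨0, by omega⟩
  set e₂ := e ⟨1, by omega⟩
  obtain ⟨f, hf⟩ := exists_dual_forall_apply_eq_one (hindep.linearIndepOn .univ)
  have h1i : f ⁅e₁, e i⁆ = 1 := hf 0 (Set.mem_univ _)
  have h2j : f ⁅e₂, e j⁆ = 1 := hf 1 (Set.mem_univ _)
  have hi1 : f ⁅e i, e₁⁆ = -1 := by rw [← lie_skew, map_neg, h1i]
  refine lieIndex_le_of_det_ne_zero f ![e₁, e₂, e i] ![e i, e j, e₁] ?_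
  simp [det_fin_three, h1i, h2j, hi1, h2i, habelian i j hi hj]
end

section
/- The 6-dimensional complex Lie algebra h₆ with basis {e₁,...,e₆} and nonzero brackets [e₁,e₂] = e₃, [e₁,e₄] = e₅, [e₂,e₄] = e₆ is nilpotent and has index 4 = dim(h₆) − 2. -/
open Module

/-! In coordinates `⁅x, y⁆ = (x₀y₁ - x₁y₀) e₂ + (x₀y₃ - x₃y₀) e₄ + (x₁y₃ - x₃y₁) e₅`, so all
brackets land in the centre `span {e₂, e₄, e₅}` and `h₆` is two-step nilpotent. For `f ∈ g*`
put `(a, b, c) = (f e₂, f e₄, f e₅)`: the form `f ⁅x, y⁆` only sees `(x₀, x₁, x₃)` and is the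
3 × 3 skew form with kernel vector `c e₀ - b e₁ + a e₃`. Hence `g^f` contains `e₂, e₄, e₅` and
that vector, so `dim g^f ≥ 4` (and `g^f = g` if `(a, b, c) = 0`), while
`g^{e₂*} = span {e₂, e₃, e₄, e₅}`. -/

theorem LieAlgebra.isNilpotent_of_lie_lie_eq_zero {R L : Type*} [CommRing R] [LieRing L]
    [LieAlgebra R L] [IsNoetherian R L] (h : ∀ x y : L, ⁅x, ⁅x, y⁆⁆ = 0) :
    LieRing.IsNilpotent L :=
  (LieAlgebra.isNilpotent_iff_forall (R := R)).mpr fun x =>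
    ⟨2, LinearMap.ext fun y => by simp [pow_two, h]⟩

theorem Module.Basis.lie_eq_sum {R L ι : Type*} [CommRing R] [LieRing L] [LieAlgebra R L]
    [Fintype ι] (e : Basis ι R L) (x y : L) :
    ⁅x, y⁆ = ∑ i, ∑ j, (e.repr x i * e.repr y j) • ⁅e i, e j⁆ := by
  conv_lhs => rw [← e.sum_repr x, ← e.sum_repr y]
  simp only [sum_lie_sum, smul_lie, lie_smul, smul_smul, mul_comm]

theorem lieIndex_eq_of_forall_le {g : Type*} [LieRing g] [LieAlgebra ℂ g] {n : ℕ}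
    (hle : ∀ f : Module.Dual ℂ g, n ≤ finrank ℂ (stabilizer f)) {f₀ : Module.Dual ℂ g}
    (h₀ : finrank ℂ (stabilizer f₀) ≤ n) : lieIndex g = n :=
  le_antisymm ((ciInf_le (OrderBot.bddBelow _) f₀).trans h₀) (le_ciInf hle)

structure IsH6Basis {g : Type*} [LieRing g] [LieAlgebra ℂ g] (e : Basis (Fin 6) ℂ g) :
    Prop where
  lie_01 : ⁅e 0, e 1⁆ = e 2
  lie_03 : ⁅e 0, e 3⁆ = e 4
  lie_13 : ⁅e 1, e 3⁆ = e 5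
  lie_eq_zero : ∀ p q : Fin 6,
    (p, q) ∉ ({(0, 1), (1, 0), (0, 3), (3, 0), (1, 3), (3, 1)} : Set (Fin 6 × Fin 6)) →
    ⁅e p, e q⁆ = 0

namespace IsH6Basis

variable {g : Type*} [LieRing g] [LieAlgebra ℂ g] {e : Basis (Fin 6) ℂ g}

theorem lie_eq (he : IsH6Basis e) (x y : g) :
    ⁅x, y⁆ = (e.repr x 0 * e.repr y 1 - e.repr x 1 * e.repr y 0) • e 2
      + (e.repr x 0 * e.repr y 3 - e.repr x 3 * e.repr y 0) • e 4
      + (e.repr x 1 * e.repr y 3 - e.repr x 3 * e.repr y 1) • e 5 := by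
  have lie_10 : ⁅e 1, e 0⁆ = -e 2 := by rw [← lie_skew, he.lie_01]
  have lie_30 : ⁅e 3, e 0⁆ = -e 4 := by rw [← lie_skew, he.lie_03]
  have lie_31 : ⁅e 3, e 1⁆ = -e 5 := by rw [← lie_skew, he.lie_13]
  rw [e.lie_eq_sum]
  simp [Fin.sum_univ_six, he.lie_01, he.lie_03, he.lie_13, lie_10, lie_30, lie_31, he.lie_eq_zero]
  module

theorem apply_lie (he : IsH6Basis e) (f : Module.Dual ℂ g) (x y : g) :
    f ⁅x, y⁆ = (e.repr x 0 * e.repr y 1 - e.repr x 1 * e.repr y 0) * f (e 2)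
      + (e.repr x 0 * e.repr y 3 - e.repr x 3 * e.repr y 0) * f (e 4)
      + (e.repr x 1 * e.repr y 3 - e.repr x 3 * e.repr y 1) * f (e 5) := by
  simp [he.lie_eq]

theorem lie_lie (he : IsH6Basis e) (x y z : g) : ⁅x, ⁅y, z⁆⁆ = 0 := by
  rw [he.lie_eq x, he.lie_eq y z]
  simp

theorem stabilizer_eq_top (he : IsH6Basis e) {f : Module.Dual ℂ g}
    (hf : f (e 2) = 0 ∧ f (e 4) = 0 ∧ f (e 5) = 0) : stabilizer f = ⊤ := by
  ext x
  simp [stabilizer, he.apply_lie, hf]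

theorem four_le_finrank_stabilizer (he : IsH6Basis e) (f : Module.Dual ℂ g) :
    4 ≤ finrank ℂ (stabilizer f) := by
  have : FiniteDimensional ℂ g := e.finiteDimensional_of_finite
  by_cases hf : f (e 2) = 0 ∧ f (e 4) = 0 ∧ f (e 5) = 0
  · rw [he.stabilizer_eq_top hf, finrank_top, finrank_eq_card_basis e, Fintype.card_fin]
    norm_num
  set w := f (e 5) • e 0 - f (e 4) • e 1 + f (e 2) • e 3
  have hcenter : LinearIndependent ℂ ![e 2, e 4, e 5] := by
    convert e.linearIndependent.comp ![2, 4, 5] (by decide) using 1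
    ext i; fin_cases i <;> rfl
  have hw : w ∉ Submodule.span ℂ (Set.range ![e 2, e 4, e 5]) := by
    have hrange : Set.range ![e 2, e 4, e 5] = e '' {2, 4, 5} := by
      simp only [Matrix.range_cons, Matrix.range_empty, Set.union_empty, Set.singleton_union,
        Set.image_insert_eq, Set.image_singleton, Set.pair_comm]
    rw [hrange, e.mem_span_image]
    intro hsupp
    have hcoord : ∀ i ∉ ({2, 4, 5} : Set (Fin 6)), e.repr w i = 0 := fun i hi =>
      Finsupp.notMem_support_iff.mp fun hs => hi (hsupp hs)
    refine hf ⟨?_, ?_, ?_⟩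
    · simpa [w] using hcoord 3 (by decide)
    · simpa [w] using hcoord 1 (by decide)
    · simpa [w] using hcoord 0 (by decide)
  have hw_mem : w ∈ stabilizer f := fun y => by
    simp only [w, he.apply_lie, map_add, map_sub, map_smul, Basis.repr_self, Finsupp.add_apply,
      Finsupp.sub_apply, Finsupp.smul_apply, Finsupp.single_apply, smul_eq_mul, Fin.reduceEq,
      if_true, if_false]
    ring
  have hmem : Set.range ![w, e 2, e 4, e 5] ⊆ stabilizer f := by
    rintro _ ⟨i, rfl⟩
    fin_cases i
    · exact hw_mem
    all_goals exact fun y => by simp [he.apply_lie]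
  have hli : LinearIndependent ℂ ![w, e 2, e 4, e 5] :=
    linearIndependent_finCons.mpr ⟨hcenter, hw⟩
  calc 4 = finrank ℂ (Submodule.span ℂ (Set.range ![w, e 2, e 4, e 5])) := by
        rw [finrank_span_eq_card hli]; simp
    _ ≤ finrank ℂ (stabilizer f) := Submodule.finrank_mono (Submodule.span_le.mpr hmem)

theorem finrank_stabilizer_coord_two_le (he : IsH6Basis e) :
    finrank ℂ (stabilizer (e.coord 2)) ≤ 4 := by
  classical
  have : FiniteDimensional ℂ g := e.finiteDimensional_of_finite
  have hle : stabilizer (e.coord 2) ≤ Submodule.span ℂ (Finset.image e {2, 3, 4, 5}) := by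
    intro x hx
    have h0 : e.repr x 0 = 0 := by simpa [he.apply_lie] using hx (e 1)
    have h1 : e.repr x 1 = 0 := by simpa [he.apply_lie] using hx (e 0)
    rw [Finset.coe_image, e.mem_span_image]
    intro i hi
    rw [Finset.mem_coe, Finsupp.mem_support_iff] at hi
    fin_cases i <;> simp_all
  have hcard : (Finset.image e {2, 3, 4, 5}).card ≤ 4 := Finset.card_image_le
  exact (Submodule.finrank_mono hle).trans ((finrank_span_finset_le_card _).trans hcard)

end IsH6Basis

/-- the 6-dimensional complex Lie algebra `h₆` with basis `e₁,...,e₆`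
(here `0`-indexed) and nonzero brackets `[e₁,e₂]=e₃`, `[e₁,e₄]=e₅`, `[e₂,e₄]=e₆`
is nilpotent and has index `4 = dim h₆ − 2`. -/
theorem h6_nilpotent_index (g : Type*) [LieRing g] [LieAlgebra ℂ g]
    (e : Basis (Fin 6) ℂ g)
    (h12 : ⁅e 0, e 1⁆ = e 2) (h14 : ⁅e 0, e 3⁆ = e 4) (h24 : ⁅e 1, e 3⁆ = e 5)
    (hzero : ∀ p q : Fin 6,
      (p, q) ∉ ({(0, 1), (1, 0), (0, 3), (3, 0), (1, 3), (3, 1)} : Set (Fin 6 × Fin 6)) →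
      ⁅e p, e q⁆ = 0) :
    LieRing.IsNilpotent g ∧ lieIndex g = 4 ∧ lieIndex g = Module.finrank ℂ g - 2 := by
  have he : IsH6Basis e := ⟨h12, h14, h24, hzero⟩
  have : FiniteDimensional ℂ g := e.finiteDimensional_of_finite
  have hidx : lieIndex g = 4 :=
    lieIndex_eq_of_forall_le he.four_le_finrank_stabilizer he.finrank_stabilizer_coord_two_le
  refine ⟨LieAlgebra.isNilpotent_of_lie_lie_eq_zero (R := ℂ) fun x y => he.lie_lie x x y,
    hidx, ?_⟩
  rw [hidx, finrank_eq_card_basis e, Fintype.card_fin]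
end
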